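/- arXiv:2103.05624 — 2 statements merged into one kernel-verified Lean document; each statement's English description precedes it below -/
import Mathlib

section
/- Let A be an m×n real matrix. Suppose for every r ∈ [min(m,n)] and every contiguous r×r submatrix A_r of A, the single vector x^{A_r} := (A_r¹¹, −A_r¹², ..., (−1)^{r−1}A_r^{1r})ᵀ satisfies: S⁺(A_r x^{A_r}) ≤ S⁻(x^{A_r}), and if equality holds then the first component of A_r x^{A_r} (or, if zero, the sign assigned to it in computing S⁺) has the same sign as the first nonzero component of x^{A_r}. Then A is totally positive. -/
open Matrix

/-- `S⁻(x)`: the number of sign changes of `x` after deleting its zero entries. -/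
noncomputable def Sminus {n : ℕ} (x : Fin n → ℝ) : ℕ :=
  sSup {m | ∃ f : Fin (m + 1) → Fin n, StrictMono f ∧
    ∀ i : Fin m, x (f i.castSucc) * x (f i.succ) < 0}

open Classical in
/-- `S⁺(x)`: the maximal number of sign changes obtainable by replacing the zero entries of
`x` by nonzero values, with the convention `S⁺(0) = n`. -/
noncomputable def Splus {n : ℕ} (x : Fin n → ℝ) : ℕ :=
  if x = 0 then n
  else sSup {m | ∃ y : Fin n → ℝ, (∀ i, y i ≠ 0) ∧ (∀ i, x i ≠ 0 → y i = x i) ∧ m = Sminus y}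

/-- The contiguous `(s+1)×(s+1)` submatrix of `A` with rows `a,…,a+s` and columns `b,…,b+s`. -/
def contSub {m n : ℕ} (A : Matrix (Fin m) (Fin n) ℝ) (a b s : ℕ)
    (ha : a + (s + 1) ≤ m) (hb : b + (s + 1) ≤ n) :
    Matrix (Fin (s + 1)) (Fin (s + 1)) ℝ :=
  fun i j => A ⟨a + i, by have := i.isLt; omega⟩ ⟨b + j, by have := j.isLt; omega⟩

/-- The vector `(B¹¹, -B¹², …, (-1)^s B^{1,s+1})` of signed first-row minors of `B`. -/
noncomputable def signAltMinorVec {s : ℕ} (B : Matrix (Fin (s + 1)) (Fin (s + 1)) ℝ) :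
    Fin (s + 1) → ℝ :=
  fun j => (-1 : ℝ) ^ (j : ℕ) * (B.submatrix Fin.succ j.succAbove).det

/-!
For a contiguous block `B`, the test vector `x^B` is the first column of `adj B`, so
`B x^B = (det B) e¹`. By induction on the size, `x^B_1` (a smaller contiguous minor) is positive.
If `det B = 0` then `S⁺(B x^B) = S⁺(0) = r` exceeds `S⁻(x^B) ≤ r - 1`; otherwise
`S⁺((det B) e¹) = r - 1`, so equality holds and the sign condition says that `det B` has the sign
of `x^B_1`. Hence every contiguous minor is positive, and Fekete's criterion finishes the proof:
induct on the total spread of the row and column indices, fill a gap between two rows by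
inserting a missing row, and use a three-term determinantal identity that writes the minor times
a positive minor as a sum of products of minors of smaller spread; gaps between columns are
handled by transposition.
-/

theorem Sminus_le {s : ℕ} (x : Fin (s + 1) → ℝ) : Sminus x ≤ s := by
  refine csSup_le' fun k ⟨f, hf, _⟩ => ?_
  simpa using Fintype.card_le_of_injective f hf.injective

theorem Sminus_eq_of_alternating {s : ℕ} {x : Fin (s + 1) → ℝ}
    (hx : ∀ i : Fin s, x i.castSucc * x i.succ < 0) : Sminus x = s := by
  refine (Sminus_le x).antisymm
    (le_csSup ⟨s, fun k ⟨f, hf, _⟩ => ?_⟩ ⟨id, strictMono_id, hx⟩)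
  simpa using Fintype.card_le_of_injective f hf.injective

theorem Splus_zero {n : ℕ} : Splus (0 : Fin n → ℝ) = n := if_pos rfl

theorem Splus_le {s : ℕ} {x : Fin (s + 1) → ℝ} (hx : x ≠ 0) : Splus x ≤ s := by
  rw [Splus, if_neg hx]
  exact csSup_le' fun k ⟨y, _, _, hk⟩ => hk ▸ Sminus_le y

theorem Splus_single {s : ℕ} (i : Fin (s + 1)) {d : ℝ} (hd : d ≠ 0) :
    Splus (Pi.single i d) = s := by
  have hne : (Pi.single i d : Fin (s + 1) → ℝ) ≠ 0 := by simpa using hd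
  refine (Splus_le hne).antisymm ?_
  rw [Splus, if_neg hne]
  set y : Fin (s + 1) → ℝ := fun k => (-1) ^ ((k : ℕ) + i) * d
  have hy : ∀ k, y k ≠ 0 := fun k => mul_ne_zero (pow_ne_zero _ (by norm_num)) hd
  have hyi : y i = d := by simp [y, ← two_mul, pow_mul]
  have halt : ∀ k : Fin s, y k.castSucc * y k.succ < 0 := fun k => by
    have : y k.succ = -y k.castSucc := by simp [y, pow_succ, add_right_comm]
    rw [this, mul_neg, neg_neg_iff_pos]
    exact mul_self_pos.2 (hy _)
  refine le_csSup ⟨s, fun k ⟨z, _, _, hk⟩ => hk ▸ Sminus_le z⟩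
    ⟨y, hy, fun k hk => ?_, (Sminus_eq_of_alternating halt).symm⟩
  obtain rfl : k = i := by by_contra h; simp [h] at hk
  simp [hyi]

theorem signAltMinorVec_eq_adjugate_mulVec {s : ℕ} (B : Matrix (Fin (s + 1)) (Fin (s + 1)) ℝ) :
    signAltMinorVec B = B.adjugate *ᵥ Pi.single 0 1 := by
  ext j
  simp [signAltMinorVec, adjugate_fin_succ_eq_det_submatrix]

theorem mulVec_signAltMinorVec {s : ℕ} (B : Matrix (Fin (s + 1)) (Fin (s + 1)) ℝ) :
    B *ᵥ signAltMinorVec B = Pi.single 0 B.det := by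
  rw [signAltMinorVec_eq_adjugate_mulVec, mulVec_mulVec, mul_adjugate, smul_mulVec, one_mulVec,
    ← Pi.single_smul', smul_eq_mul, mul_one]

def SignChangeTest {s : ℕ} (B : Matrix (Fin (s + 1)) (Fin (s + 1)) ℝ) : Prop :=
  Splus (B.mulVec (signAltMinorVec B)) ≤ Sminus (signAltMinorVec B)
    ∧ (Splus (B.mulVec (signAltMinorVec B)) = Sminus (signAltMinorVec B) →
      ∃ y : Fin (s + 1) → ℝ,
        (∀ i, y i ≠ 0)
        ∧ (∀ i, B.mulVec (signAltMinorVec B) i ≠ 0 → y i = B.mulVec (signAltMinorVec B) i)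
        ∧ Sminus y = Splus (B.mulVec (signAltMinorVec B))
        ∧ ∃ i0 : Fin (s + 1), signAltMinorVec B i0 ≠ 0
            ∧ (∀ j, j < i0 → signAltMinorVec B j = 0)
            ∧ 0 < y 0 * signAltMinorVec B i0)

theorem SignChangeTest.det_pos {s : ℕ} {B : Matrix (Fin (s + 1)) (Fin (s + 1)) ℝ}
    (hB : SignChangeTest B) (hx : 0 < signAltMinorVec B 0) : 0 < B.det := by
  obtain ⟨hle, hsign⟩ := hB
  rw [mulVec_signAltMinorVec] at hle hsign
  have hdet : B.det ≠ 0 := by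
    rintro h
    rw [h, Pi.single_zero, Splus_zero] at hle
    exact absurd (hle.trans (Sminus_le _)) (by omega)
  rw [Splus_single 0 hdet] at hle hsign
  obtain ⟨y, -, hy, -, i₀, -, hbefore, hpos⟩ := hsign (hle.antisymm (Sminus_le _))
  obtain rfl : i₀ = 0 := by
    by_contra h
    exact hx.ne' (hbefore 0 (Fin.pos_iff_ne_zero.2 h))
  rw [hy 0 (by simpa using hdet), Pi.single_eq_same] at hpos
  exact (pos_iff_pos_of_mul_pos hpos).2 hx

theorem signAltMinorVec_zero {s : ℕ} (B : Matrix (Fin (s + 1)) (Fin (s + 1)) ℝ) :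
    signAltMinorVec B 0 = (B.submatrix Fin.succ Fin.succ).det := by
  simp [signAltMinorVec]

theorem contSub_submatrix_succ {m n : ℕ} (A : Matrix (Fin m) (Fin n) ℝ) {a b s : ℕ}
    (ha : a + (s + 2) ≤ m) (hb : b + (s + 2) ≤ n) :
    (contSub A a b (s + 1) ha hb).submatrix Fin.succ Fin.succ =
      contSub A (a + 1) (b + 1) s (by omega) (by omega) := by
  ext i j
  simp only [contSub, submatrix_apply, Fin.val_succ]
  congr 2 <;> omega

theorem contSub_det_pos {m n : ℕ} {A : Matrix (Fin m) (Fin n) ℝ}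
    (h : ∀ (s a b : ℕ) (ha : a + (s + 1) ≤ m) (hb : b + (s + 1) ≤ n),
      SignChangeTest (contSub A a b s ha hb))
    (s a b : ℕ) (ha : a + (s + 1) ≤ m) (hb : b + (s + 1) ≤ n) :
    0 < (contSub A a b s ha hb).det := by
  induction s generalizing a b with
  | zero => exact (h 0 a b ha hb).det_pos (by simp [signAltMinorVec])
  | succ s ih =>
    refine (h _ a b ha hb).det_pos ?_
    rw [signAltMinorVec_zero, contSub_submatrix_succ]
    exact ih _ _ _ _

def spread {t m : ℕ} (f : Fin (t + 1) → Fin m) : ℕ := f (Fin.last t) - f 0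

section StrictMono

variable {t m : ℕ} {f : Fin (t + 1) → Fin m}

theorem StrictMono.monotone_val_sub (hf : StrictMono f) :
    Monotone fun i => (f i : ℤ) - i := by
  refine Fin.monotone_iff_le_succ.2 fun i => ?_
  have := Fin.lt_def.1 (hf i.castSucc_lt_succ)
  simp only [Fin.val_succ, Fin.val_castSucc] at this ⊢
  omega

theorem StrictMono.sub_le_val_sub_val (hf : StrictMono f) {i j : Fin (t + 1)} (hij : i ≤ j) :
    (j : ℤ) - i ≤ (f j : ℤ) - f i := by
  have := hf.monotone_val_sub hij
  simp only at this
  linarith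

theorem StrictMono.le_spread (hf : StrictMono f) : t ≤ spread f := by
  have := hf.sub_le_val_sub_val (Fin.zero_le (Fin.last t))
  simp only [Fin.val_last, Fin.val_zero] at this
  unfold spread
  omega

theorem StrictMono.val_eq_of_spread_eq (hf : StrictMono f) (hs : spread f = t) (i : Fin (t + 1)) :
    (f i : ℕ) = f 0 + i := by
  have h₁ := hf.sub_le_val_sub_val (Fin.zero_le i)
  have h₂ := hf.sub_le_val_sub_val (Fin.le_last i)
  simp only [Fin.val_last, Fin.val_zero] at h₁ h₂
  unfold spread at hs
  omega

end StrictMono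

theorem StrictMono.exists_succ_gap {t m : ℕ} {f : Fin (t + 2) → Fin m} (hf : StrictMono f)
    (hs : t + 1 < spread f) : ∃ j : Fin (t + 1), (f j.castSucc : ℕ) + 1 < f j.succ := by
  by_contra! hc
  have hmono : Monotone fun i : Fin (t + 2) => ((i : ℕ) : ℤ) - f i :=
    Fin.monotone_iff_le_succ.2 fun i => by
      have := hc i
      simp only [Fin.val_succ, Fin.val_castSucc]
      omega
  have := hmono (Fin.zero_le (Fin.last _))
  simp only [Fin.val_last, Fin.val_zero] at this
  have := hf.monotone (Fin.zero_le (Fin.last (t + 1)))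
  unfold spread at hs
  omega

theorem StrictMono.exists_insert_interior {t m : ℕ} {f : Fin (t + 2) → Fin m}
    (hf : StrictMono f) (hs : t + 1 < spread f) :
    ∃ (j : Fin (t + 1)) (ρ : Fin (t + 3) → Fin m),
      StrictMono ρ ∧ ρ ∘ j.castSucc.succ.succAbove = f ∧ spread ρ = spread f := by
  obtain ⟨j, hj⟩ := hf.exists_succ_gap hs
  set ρ := Fin.insertNth (α := fun _ => Fin m) j.castSucc.succ
    ⟨f j.castSucc + 1, hj.trans (f j.succ).isLt⟩ f
  have hρf : ρ ∘ j.castSucc.succ.succAbove = f := Fin.insertNth_comp_succAbove _ _ _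
  refine ⟨j, ρ, Fin.strictMono_insertNth hf j _ (Nat.lt_succ_self _) hj, hρf, ?_⟩
  have h₀ := congrFun hρf 0
  have h₁ := congrFun hρf (Fin.last _)
  simp only [Function.comp_apply, ne_eq, Fin.succ_ne_zero, not_false_eq_true,
    Fin.succAbove_ne_zero_zero, Fin.succ_eq_last_succ, Fin.castSucc_ne_last,
    Fin.succAbove_ne_last_last] at h₀ h₁
  simp only [spread, h₀, h₁]

theorem spread_comp_le {a b m : ℕ} {ρ : Fin (a + 1) → Fin m} (hρ : Monotone ρ)
    (φ : Fin (b + 1) → Fin (a + 1)) : spread (ρ ∘ φ) ≤ spread ρ := by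
  have h₀ : (ρ 0 : ℕ) ≤ ρ (φ 0) := hρ (Fin.zero_le _)
  have h₁ : (ρ (φ (Fin.last b)) : ℕ) ≤ ρ (Fin.last a) := hρ (Fin.le_last _)
  simp only [spread, Function.comp_apply]
  omega

theorem spread_comp_lt {a b m : ℕ} {ρ : Fin (a + 1) → Fin m} (hρ : StrictMono ρ)
    {φ : Fin (b + 1) → Fin (a + 1)} (hφ : φ 0 ≠ 0 ∨ φ (Fin.last b) ≠ Fin.last a) :
    spread (ρ ∘ φ) < spread ρ := by
  have h₀ : (ρ 0 : ℕ) ≤ ρ (φ 0) := hρ.monotone (Fin.zero_le _)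
  have h₁ : (ρ (φ (Fin.last b)) : ℕ) ≤ ρ (Fin.last a) := hρ.monotone (Fin.le_last _)
  have h₂ : (ρ 0 : ℕ) ≤ ρ (φ (Fin.last b)) := hρ.monotone (Fin.zero_le _)
  have h₃ : (ρ (φ 0) : ℕ) ≤ ρ (Fin.last a) := hρ.monotone (Fin.le_last _)
  simp only [spread, Function.comp_apply]
  rcases hφ with hφ | hφ
  · have : (ρ 0 : ℕ) < ρ (φ 0) := hρ (Fin.pos_iff_ne_zero.2 hφ)
    omega
  · have : (ρ (φ (Fin.last b)) : ℕ) < ρ (Fin.last a) := hρ (Fin.lt_last_iff_ne_last.2 hφ)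
    omega

section ThreeTerm

variable {R : Type*} [CommRing R]

theorem Matrix.det_updateRow_vecMul {n : Type*} [Fintype n] [DecidableEq n]
    (C : Matrix n n R) (y : n → R) (j : n) :
    (C.updateRow j (y ᵥ* C)).det = y j * C.det := by
  have := congrFun (cramer_eq_adjugate_mulVec Cᵀ (Cᵀ *ᵥ y)) j
  rw [mulVec_mulVec, adjugate_mul, smul_mulVec, one_mulVec, det_transpose, cramer_apply,
    updateCol_transpose, det_transpose, mulVec_transpose] at this
  simpa [mul_comm] using this

theorem Matrix.sum_neg_one_pow_mul_det_submatrix_succAbove_mul {n : ℕ}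
    (M : Matrix (Fin (n + 1)) (Fin n) R) (c : Fin n) :
    ∑ l : Fin (n + 1), (-1) ^ (l : ℕ) * (M.submatrix l.succAbove id).det * M l c = 0 := by
  set N := M.submatrix id (Fin.lastCases c id)
  have hN : N.det = 0 :=
    det_zero_of_column_eq (Fin.castSucc_lt_last c).ne fun k => by simp [N]
  have hminor : ∀ l : Fin (n + 1), N.submatrix l.succAbove (Fin.last n).succAbove =
      M.submatrix l.succAbove id := fun l => by ext; simp [N]
  rw [det_succ_column N (Fin.last n)] at hN
  have hsq : ((-1 : R) ^ n) * (-1) ^ n = 1 := by rw [← mul_pow]; simp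
  calc _ = (-1) ^ n * ∑ l : Fin (n + 1),
          (-1) ^ ((l : ℕ) + (Fin.last n : ℕ)) * N l (Fin.last n) *
        (N.submatrix l.succAbove (Fin.last n).succAbove).det := by
          rw [Finset.mul_sum]
          refine Finset.sum_congr rfl fun l _ => ?_
          rw [hminor]
          simp only [N, submatrix_apply, id, Fin.lastCases_last, Fin.val_last, pow_add]
          linear_combination
            (-(-1 : R) ^ (l : ℕ) * M l c * (M.submatrix l.succAbove id).det) * hsq
    _ = 0 := by rw [hN, mul_zero]

theorem Matrix.vecMul_interior_rows_eq {n : ℕ} (M : Matrix (Fin (n + 3)) (Fin (n + 2)) R) :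
    (fun i : Fin (n + 1) =>
        (-1) ^ ((i : ℕ) + 1) * (M.submatrix i.castSucc.succ.succAbove id).det) ᵥ*
        M.submatrix (fun i : Fin (n + 1) => i.castSucc.succ) Fin.castSucc =
      fun c => -((M.submatrix Fin.succ id).det * M 0 c.castSucc) -
        (-1) ^ n * (M.submatrix Fin.castSucc id).det * M (Fin.last _) c.castSucc := by
  ext c
  have hdep := sum_neg_one_pow_mul_det_submatrix_succAbove_mul M c.castSucc
  rw [Fin.sum_univ_succ, Fin.sum_univ_castSucc] at hdep
  simp only [vecMul, dotProduct, submatrix_apply, Fin.val_zero, pow_zero, one_mul,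
    Fin.succAbove_zero, Fin.val_succ, Fin.val_castSucc, Fin.succ_last, Fin.val_last,
    Fin.succAbove_last, Nat.succ_eq_add_one] at hdep ⊢
  linear_combination hdep

/-- Cramer's rule for the interior block, applied to the relation `vecMul_interior_rows_eq`. -/
theorem Matrix.plucker_three_term {n : ℕ} (M : Matrix (Fin (n + 3)) (Fin (n + 2)) R)
    (j : Fin (n + 1)) :
    (M.submatrix j.castSucc.succ.succAbove id).det *
        (M.submatrix (fun i : Fin (n + 1) => i.castSucc.succ) Fin.castSucc).det =
      (M.submatrix Fin.succ id).det *
          (M.submatrix (fun i => (j.succ.succAbove i).castSucc) Fin.castSucc).det +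
        (M.submatrix Fin.castSucc id).det *
          (M.submatrix (fun i => (j.castSucc.succAbove i).succ) Fin.castSucc).det := by
  set C := M.submatrix (fun i : Fin (n + 1) => i.castSucc.succ) Fin.castSucc
  set μ : Fin (n + 1) → R := fun c => (C.submatrix j.succAbove c.succAbove).det
  have hlaplace : ∀ v, (C.updateRow j v).det =
      ∑ c : Fin (n + 1), (-1) ^ ((j : ℕ) + c) * v c * μ c := fun v => by
    rw [det_succ_row _ j]
    simp only [updateRow_self, submatrix_updateRow_succAbove, μ]
  have hP : (M.submatrix (fun i => (j.succ.succAbove i).castSucc) Fin.castSucc).det =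
      ∑ c : Fin (n + 1), (-1) ^ (c : ℕ) * M 0 c.castSucc * μ c := by
    rw [det_succ_row_zero]
    refine Finset.sum_congr rfl fun c _ => ?_
    congr 2
    simp [C, Function.comp_def]
  have hQ : (M.submatrix (fun i => (j.castSucc.succAbove i).succ) Fin.castSucc).det =
      ∑ c : Fin (n + 1), (-1) ^ (n + c : ℕ) * M (Fin.last _) c.castSucc * μ c := by
    rw [det_succ_row _ (Fin.last n)]
    refine Finset.sum_congr rfl fun c _ => ?_
    congr 2 <;> simp [C, Function.comp_def, Fin.castSucc_succAbove_castSucc]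
  have key := det_updateRow_vecMul C
    (fun i => (-1) ^ ((i : ℕ) + 1) * (M.submatrix i.castSucc.succ.succAbove id).det) j
  rw [vecMul_interior_rows_eq, hlaplace] at key
  have hsum : ∑ c : Fin (n + 1), (-1) ^ ((j : ℕ) + c) *
      (-((M.submatrix Fin.succ id).det * M 0 c.castSucc) -
        (-1) ^ n * (M.submatrix Fin.castSucc id).det * M (Fin.last _) c.castSucc) * μ c =
      -(-1) ^ (j : ℕ) * ((M.submatrix Fin.succ id).det *
          ∑ c : Fin (n + 1), (-1) ^ (c : ℕ) * M 0 c.castSucc * μ c +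
        (M.submatrix Fin.castSucc id).det *
          ∑ c : Fin (n + 1), (-1) ^ (n + c : ℕ) * M (Fin.last _) c.castSucc * μ c) := by
    simp only [Finset.mul_sum, ← Finset.sum_add_distrib]
    exact Finset.sum_congr rfl fun c _ => by ring
  rw [hsum] at key
  rw [hP, hQ]
  apply ((isUnit_neg_one (α := R)).pow j).mul_left_cancel
  linear_combination key

end ThreeTerm

section Fekete

variable {m n : ℕ}

theorem contSub_transpose (A : Matrix (Fin m) (Fin n) ℝ) (a b s : ℕ) (ha : a + (s + 1) ≤ n)
    (hb : b + (s + 1) ≤ m) : contSub Aᵀ a b s ha hb = (contSub A b a s hb ha)ᵀ :=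
  rfl

theorem det_submatrix_pos_of_spread_eq {A : Matrix (Fin m) (Fin n) ℝ}
    (hA : ∀ (s a b : ℕ) (ha : a + (s + 1) ≤ m) (hb : b + (s + 1) ≤ n),
      0 < (contSub A a b s ha hb).det)
    {t : ℕ} {f : Fin (t + 1) → Fin m} {g : Fin (t + 1) → Fin n} (hf : StrictMono f)
    (hg : StrictMono g) (hfs : spread f = t) (hgs : spread g = t) :
    0 < (A.submatrix f g).det := by
  have hf' := hf.val_eq_of_spread_eq hfs
  have hg' := hg.val_eq_of_spread_eq hgs
  have ha : (f 0 : ℕ) + (t + 1) ≤ m := by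
    have := hf' (Fin.last t); have := (f (Fin.last t)).isLt; simp only [Fin.val_last] at *; omega
  have hb : (g 0 : ℕ) + (t + 1) ≤ n := by
    have := hg' (Fin.last t); have := (g (Fin.last t)).isLt; simp only [Fin.val_last] at *; omega
  convert hA t _ _ ha hb using 2
  ext i j
  simp only [submatrix_apply, contSub]
  congr 1
  · exact Fin.ext (hf' i)
  · exact Fin.ext (hg' j)

theorem det_submatrix_pos_of_row_gap (A : Matrix (Fin m) (Fin n) ℝ) {t : ℕ}
    {f : Fin (t + 2) → Fin m} {g : Fin (t + 2) → Fin n} (hf : StrictMono f) (hg : StrictMono g)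
    (hgap : t + 1 < spread f)
    (IH : ∀ (t' : ℕ) (f' : Fin (t' + 1) → Fin m) (g' : Fin (t' + 1) → Fin n),
      StrictMono f' → StrictMono g' → spread f' + spread g' < spread f + spread g →
        0 < (A.submatrix f' g').det) :
    0 < (A.submatrix f g).det := by
  obtain ⟨j, ρ, hρ, hρf, hspread⟩ := hf.exists_insert_interior hgap
  have hminor :
      ∀ (t' : ℕ) (φ : Fin (t' + 1) → Fin (t + 3)) (ψ : Fin (t' + 1) → Fin (t + 2)),
      StrictMono φ → StrictMono ψ →
      (φ 0 ≠ 0 ∨ φ (Fin.last t') ≠ Fin.last _ ∨ ψ (Fin.last t') ≠ Fin.last _) →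
        0 < ((A.submatrix ρ g).submatrix φ ψ).det := by
    intro t' φ ψ hφ hψ hne
    rw [submatrix_submatrix]
    refine IH t' _ _ (hρ.comp hφ) (hg.comp hψ) ?_
    rw [← hspread]
    rcases hne with hne | hne | hne
    · exact add_lt_add_of_lt_of_le (spread_comp_lt hρ (.inl hne)) (spread_comp_le hg.monotone ψ)
    · exact add_lt_add_of_lt_of_le (spread_comp_lt hρ (.inr hne)) (spread_comp_le hg.monotone ψ)
    · exact add_lt_add_of_le_of_lt (spread_comp_le hρ.monotone φ) (spread_comp_lt hg (.inr hne))
  have hk : (A.submatrix ρ g).submatrix j.castSucc.succ.succAbove id = A.submatrix f g := by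
    rw [submatrix_submatrix, hρf]
    rfl
  have key := plucker_three_term (A.submatrix ρ g) j
  rw [hk] at key
  have hC := hminor _ _ _ (Fin.strictMono_succ.comp Fin.strictMono_castSucc)
    Fin.strictMono_castSucc (.inr (.inr (Fin.castSucc_lt_last _).ne))
  have hD₀ := hminor _ _ _ Fin.strictMono_succ strictMono_id (.inl (Fin.succ_ne_zero 0))
  have hD₁ := hminor _ _ _ Fin.strictMono_castSucc strictMono_id
    (.inr (.inl (Fin.castSucc_lt_last _).ne))
  have hP := hminor _ _ _ (Fin.strictMono_castSucc.comp (Fin.strictMono_succAbove j.succ))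
    Fin.strictMono_castSucc (.inr (.inr (Fin.castSucc_lt_last _).ne))
  have hQ := hminor _ _ _ (Fin.strictMono_succ.comp (Fin.strictMono_succAbove j.castSucc))
    Fin.strictMono_castSucc (.inr (.inr (Fin.castSucc_lt_last _).ne))
  have hprod := (add_pos (mul_pos hD₀ hP) (mul_pos hD₁ hQ)).trans_eq key.symm
  exact (pos_iff_pos_of_mul_pos hprod).2 hC

theorem det_submatrix_pos_of_contSub_det_pos {A : Matrix (Fin m) (Fin n) ℝ}
    (hA : ∀ (s a b : ℕ) (ha : a + (s + 1) ≤ m) (hb : b + (s + 1) ≤ n),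
      0 < (contSub A a b s ha hb).det)
    {t : ℕ} {f : Fin (t + 1) → Fin m} {g : Fin (t + 1) → Fin n} (hf : StrictMono f)
    (hg : StrictMono g) : 0 < (A.submatrix f g).det := by
  induction hN : spread f + spread g using Nat.strong_induction_on generalizing m n A t with
  | _ N IH =>
  have hAt : ∀ (s a b : ℕ) (ha : a + (s + 1) ≤ n) (hb : b + (s + 1) ≤ m),
      0 < (contSub Aᵀ a b s ha hb).det := fun s a b ha hb => by
    rw [contSub_transpose, det_transpose]
    exact hA s b a hb ha
  rcases hf.le_spread.eq_or_lt with hfs | hfs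
  · rcases hg.le_spread.eq_or_lt with hgs | hgs
    · exact det_submatrix_pos_of_spread_eq hA hf hg hfs.symm hgs.symm
    · obtain _ | t := t
      · simp [spread] at hgs
      rw [← det_transpose, transpose_submatrix]
      refine det_submatrix_pos_of_row_gap Aᵀ hg hf hgs fun t' g' f' hg' hf' hlt => ?_
      exact IH _ (by omega) hAt hg' hf' rfl
  · obtain _ | t := t
    · simp [spread] at hfs
    refine det_submatrix_pos_of_row_gap A hf hg hfs fun t' f' g' hf' hg' hlt => ?_
    exact IH _ (by omega) hA hf' hg' rfl

end Fekete

/-- Suppose that for every contiguous `r×r` submatrix `B` of `A`, the single test vector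
`x^B = (B¹¹, -B¹², …)` satisfies `S⁺(B x^B) ≤ S⁻(x^B)`, and moreover if equality holds then
the first component of `B x^B` (or, if it is zero, the sign assigned to it in a maximizing
sign assignment computing `S⁺(B x^B)`) has the same sign as the first nonzero component of
`x^B`. Then `A` is totally positive. -/
theorem stmt13 {m n : ℕ} (A : Matrix (Fin m) (Fin n) ℝ)
    (h : ∀ (s a b : ℕ) (ha : a + (s + 1) ≤ m) (hb : b + (s + 1) ≤ n),
      Splus ((contSub A a b s ha hb).mulVec (signAltMinorVec (contSub A a b s ha hb)))
        ≤ Sminus (signAltMinorVec (contSub A a b s ha hb))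
      ∧ (Splus ((contSub A a b s ha hb).mulVec (signAltMinorVec (contSub A a b s ha hb)))
            = Sminus (signAltMinorVec (contSub A a b s ha hb)) →
          ∃ y : Fin (s + 1) → ℝ,
            (∀ i, y i ≠ 0)
            ∧ (∀ i, (contSub A a b s ha hb).mulVec
                (signAltMinorVec (contSub A a b s ha hb)) i ≠ 0 →
                y i = (contSub A a b s ha hb).mulVec
                  (signAltMinorVec (contSub A a b s ha hb)) i)
            ∧ Sminus y = Splus ((contSub A a b s ha hb).mulVec
                (signAltMinorVec (contSub A a b s ha hb)))
            ∧ ∃ i0 : Fin (s + 1), signAltMinorVec (contSub A a b s ha hb) i0 ≠ 0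
                ∧ (∀ j, j < i0 → signAltMinorVec (contSub A a b s ha hb) j = 0)
                ∧ 0 < y 0 * signAltMinorVec (contSub A a b s ha hb) i0)) :
    ∀ r : ℕ, ∀ (f : Fin r → Fin m) (g : Fin r → Fin n),
      StrictMono f → StrictMono g → 0 < (A.submatrix f g).det := by
  rintro (_ | r) f g hf hg
  · simp
  · exact det_submatrix_pos_of_contSub_det_pos (contSub_det_pos h) hf hg
end

section
/- Let x ∈ ℝʳ have all coordinates nonzero and not alternating in sign, and let A be an r×r matrix that is totally non-negative of order r−1 (all minors of size ≤ r−1 are ≥ 0). Then there exists i ∈ [r] with xᵢ(Ax)ᵢ ≥ 0. -/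
/-!
Suppose `xᵢ (Ax)ᵢ < 0` for all `i`, and w.l.o.g. `x₀ > 0`. Group the coordinates of `x` into
maximal blocks of constant sign; as `x` does not alternate there are `n < r` blocks. Keeping one
row of `A` per block and merging the columns of each block, weighted by `|xⱼ|`, gives an `n × n`
matrix `V` which is totally nonnegative (by multilinearity of the determinant) and satisfies
`(-1)ˡ (V y)ₗ < 0` for `y = ((-1)ᵐ)ₘ`. For such a `V`, the Laplace expansion of
`det V = det [V y | V₂ ⋯ Vₙ]` gives `det V = 0`; bordering a window of consecutive rows of `V`
with `V y` and expanding again, all minors on `s` consecutive rows vanish, by downward induction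
on `s`. At `s = 0` this is absurd.
-/

open Matrix

namespace Matrix

/-- The paper's `TN_k`. -/
def IsTotallyNonnegOfOrder {m n : ℕ} (k : ℕ) (M : Matrix (Fin m) (Fin n) ℝ) : Prop :=
  ∀ s ≤ k, ∀ (f : Fin s → Fin m) (g : Fin s → Fin n), StrictMono f → StrictMono g →
    0 ≤ (M.submatrix f g).det

variable {R : Type*} [CommRing R] {n κ : Type*} [Fintype n] [DecidableEq n] [Fintype κ]

theorem det_mul_eq_sum_det_submatrix (A : Matrix n κ R) (B : Matrix κ n R) :
    (A * B).det = ∑ φ : n → κ, (∏ q, B (φ q) q) * (A.submatrix id φ).det := by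
  have hrows : (A * B)ᵀ = fun q => ∑ j, B j q • Aᵀ j := by
    ext q p; simp [mul_apply, Finset.sum_apply, mul_comm]
  rw [← det_transpose, hrows]
  change detRowAlternating.toMultilinearMap _ = _
  rw [MultilinearMap.map_sum]
  refine Finset.sum_congr rfl fun φ _ => ?_
  rw [MultilinearMap.map_smul_univ, smul_eq_mul, ← det_transpose (A.submatrix id φ)]
  rfl

theorem det_submatrix_eq_zero_of_forall_strictMono {s : ℕ} {m α : Type*} [LinearOrder α]
    (M : Matrix m α R) (f : Fin s → m)
    (h : ∀ g : Fin s → α, StrictMono g → (M.submatrix f g).det = 0)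
    (φ : Fin s → α) : (M.submatrix f φ).det = 0 := by
  by_cases hφ : Function.Injective φ
  · have hsorted : StrictMono (φ ∘ Tuple.sort φ) :=
      (Tuple.monotone_sort φ).strictMono_of_injective (hφ.comp (Tuple.sort φ).injective)
    have hperm : M.submatrix f φ
        = (M.submatrix f (φ ∘ Tuple.sort φ)).submatrix id (Tuple.sort φ).symm := by
      ext i k; simp
    rw [hperm, det_permute', h _ hsorted, mul_zero]
  · obtain ⟨a, b, hab, hne⟩ := Function.not_injective_iff.mp hφ
    exact det_zero_of_column_eq hne fun k => by simp [hab]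

/-- The matrix with columns `W_{g 0}, …, W_{g (s-1)}, W y` is singular, since all its columns are
combinations of columns of `W`, while all terms of its Laplace expansion along the last column
have the same sign. -/
theorem det_submatrix_succAbove_eq_zero {s : ℕ} (W : Matrix (Fin (s + 1)) κ ℝ) (y : κ → ℝ)
    (c : ℝ) (hW : ∀ φ : Fin (s + 1) → κ, (W.submatrix id φ).det = 0)
    (hsign : ∀ i : Fin (s + 1), c * ((-1) ^ (i : ℕ) * (W *ᵥ y) i) < 0) (g : Fin s → κ)
    (hg : ∀ i : Fin (s + 1), 0 ≤ (W.submatrix i.succAbove g).det) (i : Fin (s + 1)) :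
    (W.submatrix i.succAbove g).det = 0 := by
  classical
  set B : Matrix κ (Fin (s + 1)) ℝ :=
    of fun j => Fin.snoc (fun q => if g q = j then 1 else 0) (y j)
  have hdet : (W * B).det = 0 := by
    rw [det_mul_eq_sum_det_submatrix]; simp [hW]
  have hcol : ∀ i, (W * B) i (Fin.last s) = (W *ᵥ y) i := by
    intro i; simp [B, mul_apply, mulVec, dotProduct]
  have hminor : ∀ i : Fin (s + 1), (W * B).submatrix i.succAbove (Fin.last s).succAbove
      = W.submatrix i.succAbove g := by
    intro i; ext a q; simp [B, mul_apply, Fin.succAbove_last]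
  rw [det_succ_column _ (Fin.last s)] at hdet
  simp only [hcol, hminor, Fin.val_last] at hdet
  have hsq : ((-1 : ℝ) ^ s) * (-1) ^ s = 1 := by rw [← mul_pow]; norm_num
  have hsum : ∑ i : Fin (s + 1), c * ((-1) ^ (i : ℕ) * (W *ᵥ y) i)
      * (W.submatrix i.succAbove g).det = 0 := by
    rw [← mul_zero (c * (-1) ^ s), ← hdet, Finset.mul_sum]
    refine Finset.sum_congr rfl fun i _ => ?_
    rw [pow_add]
    linear_combination
      (-c * (-1) ^ (i : ℕ) * (W *ᵥ y) i * (W.submatrix i.succAbove g).det) * hsq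
  have hterm := (Finset.sum_eq_zero_iff_of_nonpos fun i _ =>
    mul_nonpos_of_nonpos_of_nonneg (hsign i).le (hg i)).mp hsum i (Finset.mem_univ i)
  exact (mul_eq_zero.mp hterm).resolve_left (hsign i).ne

theorem det_nonpos_of_neg_one_pow_mul_mulVec_neg {N : ℕ}
    (V : Matrix (Fin (N + 1)) (Fin (N + 1)) ℝ)
    (hminor : ∀ i : Fin (N + 1), 0 ≤ (V.submatrix i.succAbove Fin.succ).det)
    (hsign : ∀ l : Fin (N + 1), (-1) ^ (l : ℕ) * (V *ᵥ fun m => (-1) ^ (m : ℕ)) l < 0) :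
    V.det ≤ 0 := by
  set y : Fin (N + 1) → ℝ := fun m => (-1) ^ (m : ℕ)
  have hcol : (V.updateCol 0 (V *ᵥ y)).det = V.det := by
    have hu : V *ᵥ y = fun k => ∑ m, y m • V k m := by
      ext k; simp [mulVec, dotProduct, mul_comm]
    rw [hu, det_updateCol_sum]
    simp [y]
  rw [← hcol, det_succ_column_zero]
  refine Finset.sum_nonpos fun i _ => ?_
  have hsub : (V.updateCol 0 (V *ᵥ y)).submatrix i.succAbove Fin.succ
      = V.submatrix i.succAbove Fin.succ := by
    ext a b; simp
  rw [hsub, updateCol_self]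
  exact mul_nonpos_of_nonpos_of_nonneg (hsign i).le (hminor i)

theorem exists_nonneg_neg_one_pow_mul_mulVec {n : ℕ} (hn : 0 < n) (V : Matrix (Fin n) (Fin n) ℝ)
    (hV : V.IsTotallyNonnegOfOrder n) :
    ∃ l : Fin n, 0 ≤ (-1) ^ (l : ℕ) * (V *ᵥ fun m => (-1) ^ (m : ℕ)) l := by
  by_contra! hsign
  obtain ⟨N, rfl⟩ : ∃ N, n = N + 1 := ⟨n - 1, by omega⟩
  have hdet : V.det = 0 := by
    refine le_antisymm (det_nonpos_of_neg_one_pow_mul_mulVec_neg V (fun i => ?_) hsign) ?_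
    · exact hV N (by omega) _ _ (Fin.strictMono_succAbove i) (Fin.strictMono_succ)
    · simpa using hV (N + 1) le_rfl id id strictMono_id strictMono_id
  -- minors on the consecutive rows `t, …, t + s - 1`, by downward induction on `s`
  have hwin : ∀ k s, s + k = N + 1 → ∀ t (ht : t + s ≤ N + 1) (φ : Fin s → Fin (N + 1)),
      (V.submatrix (fun a : Fin s => (⟨t + a, by omega⟩ : Fin (N + 1))) φ).det = 0 := by
    intro k
    induction k with
    | zero =>
      intro s hs t ht φ
      obtain rfl : s = N + 1 := by omega
      obtain rfl : t = 0 := by omega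
      refine det_submatrix_eq_zero_of_forall_strictMono V _ (fun g hg => ?_) φ
      rw [hg.eq_id]
      convert hdet
      ext; simp
    | succ k ih =>
      intro s hs t ht φ
      refine det_submatrix_eq_zero_of_forall_strictMono V _ (fun g hg => ?_) φ
      -- enlarge the window by the row below it, or above it when there is none below
      obtain ⟨t', ht', i, hrow⟩ : ∃ t' : ℕ, ∃ _ : t' + (s + 1) ≤ N + 1,
          ∃ i : Fin (s + 1), ∀ a : Fin s, t' + (i.succAbove a : ℕ) = t + a := by
        by_cases hlast : t + (s + 1) ≤ N + 1
        · exact ⟨t, hlast, Fin.last s, fun a => by simp⟩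
        · exact ⟨t - 1, by omega, 0, fun a => by simp; omega⟩
      have hzero := det_submatrix_succAbove_eq_zero
        (V.submatrix (fun a : Fin (s + 1) => (⟨t' + a, by omega⟩ : Fin (N + 1))) id)
        (fun m => (-1) ^ (m : ℕ)) ((-1) ^ t') (ih (s + 1) (by omega) t' ht')
        (fun j => by rw [← mul_assoc, ← pow_add]; exact hsign ⟨t' + j, by omega⟩) g
        (fun j => hV s (by omega) _ g (fun a b hab => by
          simpa using (Fin.strictMono_succAbove j) hab) hg) i
      convert hzero using 2
      ext a; simp [hrow]
  simpa using hwin (N + 1) 0 (by omega) 0 (by omega) Fin.elim0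

end Matrix

theorem StrictMono.of_monotone_comp {α β γ : Type*} [Preorder α] [LinearOrder β] [Preorder γ]
    {g : β → γ} {f : α → β} (hg : Monotone g) (h : StrictMono (g ∘ f)) : StrictMono f :=
  fun _ _ hlt => lt_of_not_ge fun hle => (h hlt).not_ge (hg hle)

theorem exists_nonneg_mul_mulVec_of_signPattern {r n : ℕ} (hn : 0 < n)
    (A : Matrix (Fin r) (Fin r) ℝ) (hA : A.IsTotallyNonnegOfOrder n) (x : Fin r → ℝ)
    (b : Fin r → Fin n) (hb : Monotone b) (hsurj : Function.Surjective b)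
    (hx : ∀ j, 0 ≤ (-1) ^ (b j : ℕ) * x j) :
    ∃ i, 0 ≤ x i * (A *ᵥ x) i := by
  set I := Function.surjInv hsurj
  have hbI : ∀ l, b (I l) = l := Function.surjInv_eq hsurj
  have hI : StrictMono I :=
    .of_monotone_comp hb ((show b ∘ I = id from funext hbI) ▸ strictMono_id)
  have hsq : ∀ k : ℕ, ((-1 : ℝ) ^ k) * (-1) ^ k = 1 := fun k => by rw [← mul_pow]; norm_num
  set B : Matrix (Fin r) (Fin n) ℝ :=
    of fun j m => if b j = m then (-1) ^ (m : ℕ) * x j else 0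
  have hBy : (B *ᵥ fun m => (-1) ^ (m : ℕ)) = x := by
    ext j
    simp only [B, mulVec, dotProduct, of_apply, ite_mul, zero_mul, Finset.sum_ite_eq,
      Finset.mem_univ, if_true]
    linear_combination x j * hsq (b j)
  have hV : (A.submatrix I id * B).IsTotallyNonnegOfOrder n := by
    intro s hs f g hf hg
    rw [submatrix_mul _ _ _ id _ Function.bijective_id, det_mul_eq_sum_det_submatrix]
    refine Finset.sum_nonneg fun φ _ => ?_
    by_cases hφ : b ∘ φ = g
    · have hφmono : StrictMono φ := .of_monotone_comp hb (hφ ▸ hg)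
      refine mul_nonneg (Finset.prod_nonneg fun q _ => ?_)
        (hA s hs _ φ (hI.comp hf) hφmono)
      simpa [B, ← congrFun hφ q] using hx (φ q)
    · obtain ⟨q, hq⟩ := Function.ne_iff.mp hφ
      have hBq : B (φ q) (g q) = 0 := by simp [B, show b (φ q) ≠ g q from hq]
      rw [Finset.prod_eq_zero (Finset.mem_univ q) hBq, zero_mul]
  obtain ⟨l, hl⟩ := exists_nonneg_neg_one_pow_mul_mulVec hn _ hV
  have hAx : (A.submatrix I id *ᵥ x) l = (A *ᵥ x) (I l) := rfl
  rw [← mulVec_mulVec, hBy, hAx] at hl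
  refine ⟨I l, ?_⟩
  have hxI := hx (I l)
  rw [hbI l] at hxI
  calc 0 ≤ ((-1) ^ (l : ℕ) * x (I l)) * ((-1) ^ (l : ℕ) * (A *ᵥ x) (I l)) :=
        mul_nonneg hxI hl
    _ = x (I l) * (A *ᵥ x) (I l) := by
        linear_combination (x (I l) * (A *ᵥ x) (I l)) * hsq l

noncomputable def signChanges (X : ℕ → ℝ) : ℕ → ℕ
  | 0 => 0
  | k + 1 => signChanges X k + if X k * X (k + 1) < 0 then 1 else 0

theorem monotone_signChanges (X : ℕ → ℝ) : Monotone (signChanges X) :=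
  monotone_nat_of_le_succ fun k => by simp only [signChanges]; omega

theorem signChanges_succ_le (X : ℕ → ℝ) (k : ℕ) :
    signChanges X (k + 1) ≤ signChanges X k + 1 := by
  simp only [signChanges]; split <;> omega

theorem signChanges_succ_of_pos (X : ℕ → ℝ) {k : ℕ} (h : 0 < X k * X (k + 1)) :
    signChanges X (k + 1) = signChanges X k := by
  simp [signChanges, h.not_gt]

theorem exists_signChanges_eq (X : ℕ → ℝ) (k : ℕ) :
    ∀ l ≤ signChanges X k, ∃ i ≤ k, signChanges X i = l := by
  induction k with
  | zero => exact fun l hl => ⟨0, le_rfl, by simp_all [signChanges]⟩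
  | succ k ih =>
    intro l hl
    rcases le_or_gt l (signChanges X k) with hle | hgt
    · obtain ⟨i, hik, hi⟩ := ih l hle
      exact ⟨i, by omega, hi⟩
    · exact ⟨k + 1, le_rfl, by have := signChanges_succ_le X k; omega⟩

theorem neg_one_pow_signChanges_mul_pos (X : ℕ → ℝ) (h0 : 0 < X 0) (k : ℕ)
    (hX : ∀ i ≤ k, X i ≠ 0) : 0 < (-1) ^ signChanges X k * X k := by
  induction k with
  | zero => simpa [signChanges] using h0
  | succ k ih =>
    have hk := ih fun i hi => hX i (by omega)
    have hk1 := hX (k + 1) le_rfl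
    simp only [signChanges]
    split_ifs with hneg
    · rw [pow_succ]
      nlinarith [sq_nonneg (X k)]
    · have hpos : 0 < X k * X (k + 1) :=
        lt_of_le_of_ne (not_lt.mp hneg) (mul_ne_zero (hX k (by omega)) hk1).symm
      rw [add_zero]
      nlinarith [sq_nonneg (X k)]

theorem exists_monotone_surjective_signPattern {N : ℕ} (x : Fin (N + 1) → ℝ) (h0 : 0 < x 0)
    (hx0 : ∀ i, x i ≠ 0) (j : ℕ) (hj : j + 1 < N + 1)
    (hsame : 0 < x ⟨j, by omega⟩ * x ⟨j + 1, hj⟩) :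
    ∃ n < N + 1, ∃ b : Fin (N + 1) → Fin n, Monotone b ∧ Function.Surjective b ∧
      ∀ i, 0 < (-1) ^ (b i : ℕ) * x i := by
  set X : ℕ → ℝ := fun i => x ⟨min i N, by omega⟩
  have hX : ∀ i : Fin (N + 1), X i = x i := fun i => congrArg x (Fin.ext (min_eq_left i.is_le))
  set b : Fin (N + 1) → Fin (signChanges X N + 1) := fun i =>
    ⟨signChanges X i, Nat.lt_succ_of_le (monotone_signChanges X (Fin.is_le i))⟩
  have hsurj : Function.Surjective b := fun l => by
    obtain ⟨i, hiN, hi⟩ := exists_signChanges_eq X N l (Fin.is_le l)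
    exact ⟨⟨i, by omega⟩, Fin.ext hi⟩
  have hnotinj : ¬ Function.Injective b := fun hinj => by
    have := @hinj ⟨j, by omega⟩ ⟨j + 1, hj⟩ (Fin.ext (signChanges_succ_of_pos X ?_).symm)
    · simp [Fin.ext_iff] at this
    · rwa [hX ⟨j, by omega⟩, hX ⟨j + 1, hj⟩]
  refine ⟨_, ?_, b, fun i i' h => monotone_signChanges X h, hsurj, fun i => ?_⟩
  · simpa using Fintype.card_lt_of_surjective_not_injective b hsurj hnotinj
  · rw [← hX]
    exact neg_one_pow_signChanges_mul_pos X (by simpa [X] using h0) i fun k _ => hx0 _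

/-- If `x ∈ ℝʳ` has all coordinates nonzero and is not alternating in sign (some two
consecutive coordinates share a sign), and `A` is `TN_{r-1}` (all minors of size at most
`r-1` nonnegative), then there is `i` with `xᵢ (Ax)ᵢ ≥ 0`. -/
theorem stmt19 {r : ℕ} (x : Fin r → ℝ) (hx0 : ∀ i, x i ≠ 0)
    (hsame : ∃ i : ℕ, ∃ h : i + 1 < r, 0 < x ⟨i, by omega⟩ * x ⟨i + 1, h⟩)
    (A : Matrix (Fin r) (Fin r) ℝ)
    (hTN : ∀ p : ℕ, p < r → ∀ (f g : Fin p → Fin r), StrictMono f → StrictMono g →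
      0 ≤ (A.submatrix f g).det) :
    ∃ i : Fin r, 0 ≤ x i * (A.mulVec x) i := by
  obtain ⟨j, hj, hsame⟩ := hsame
  obtain ⟨N, rfl⟩ : ∃ N, r = N + 1 := ⟨r - 1, by omega⟩
  wlog h0 : 0 < x 0 generalizing x
  · obtain ⟨i, hi⟩ := this (-x) (by simpa using hx0) (by simpa using hsame)
      (by simpa using lt_of_le_of_ne (not_lt.mp h0) (hx0 0))
    exact ⟨i, by simpa [mulVec_neg] using hi⟩
  obtain ⟨n, hnr, b, hb, hsurj, hsign⟩ :=
    exists_monotone_surjective_signPattern x h0 hx0 j hj hsame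
  exact exists_nonneg_mul_mulVec_of_signPattern (b 0).pos A (fun s hs => hTN s (by omega)) x
    b hb hsurj fun i => (hsign i).le
end
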